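/- Fix ε > 0 and define G : ℝ² → ℝ³ by G(u, v) = (N1, N2, N3), where N1 = I11·u + (ε/2)·v·(I13·u + I23·v) + (ε²/4)·u·(I11·u² + I22·v²), N2 = I22·v − (ε/2)·u·(I13·u + I23·v) + (ε²/4)·v·(I11·u² + I22·v²), N3 = I13·u + I23·v + (ε/2)·u·v·(I22 − I11). Then G(0, 0) = (0, 0, 0), G is differentiable at (0, 0), and the image of the derivative of G at (0, 0) equals the plane d* = {(X, Y, Z) ∈ ℝ³ : I11·I22·Z = I13·I22·X + I11·I23·Y}. In particular the discrete momentum locus G(ℝ²) and the plane d* are tangent at the origin. -/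

import Mathlib

/-!
Every nonlinear term of `Gcay` is a product of two factors vanishing at the origin, so its
derivative there is the linear part `(u, v) ↦ (I11 u, I22 v, I13 u + I23 v)`. As `I11` and
`I22` are nonzero, the first two coordinates of the image are free, and eliminating `u, v`
from the third leaves exactly the plane `d*`.
-/

noncomputable section

/-- The parametrisation of the discrete momentum locus of the consistent (Cayley-based)
discretisation of the Suslov problem with time step `ε`. -/
def Gcay (I11 I22 I13 I23 ε : ℝ) : ℝ × ℝ → ℝ × ℝ × ℝ := fun p =>
  (I11 * p.1 + (ε / 2) * p.2 * (I13 * p.1 + I23 * p.2)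
      + (ε ^ 2 / 4) * p.1 * (I11 * p.1 ^ 2 + I22 * p.2 ^ 2),
   I22 * p.2 - (ε / 2) * p.1 * (I13 * p.1 + I23 * p.2)
      + (ε ^ 2 / 4) * p.2 * (I11 * p.1 ^ 2 + I22 * p.2 ^ 2),
   I13 * p.1 + I23 * p.2 + (ε / 2) * p.1 * p.2 * (I22 - I11))

section LinearPart

variable {𝕜 : Type*} [Field 𝕜] [TopologicalSpace 𝕜] [IsTopologicalRing 𝕜]

def suslovLinearPart (a b c d : 𝕜) : 𝕜 × 𝕜 →L[𝕜] 𝕜 × 𝕜 × 𝕜 :=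
  (a • ContinuousLinearMap.fst 𝕜 𝕜 𝕜).prod
    ((b • ContinuousLinearMap.snd 𝕜 𝕜 𝕜).prod
      (c • ContinuousLinearMap.fst 𝕜 𝕜 𝕜 + d • ContinuousLinearMap.snd 𝕜 𝕜 𝕜))

@[simp]
theorem suslovLinearPart_apply (a b c d : 𝕜) (p : 𝕜 × 𝕜) :
    suslovLinearPart a b c d p = (a * p.1, b * p.2, c * p.1 + d * p.2) :=
  rfl

theorem range_suslovLinearPart {a b : 𝕜} (c d : 𝕜) (ha : a ≠ 0) (hb : b ≠ 0) :
    Set.range (suslovLinearPart a b c d) =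
      {p : 𝕜 × 𝕜 × 𝕜 | a * b * p.2.2 = c * b * p.1 + a * d * p.2.1} := by
  ext ⟨X, Y, Z⟩
  simp only [Set.mem_range, Set.mem_ofPred_eq, suslovLinearPart_apply, Prod.mk.injEq,
    Prod.exists]
  constructor
  · rintro ⟨u, v, rfl, rfl, rfl⟩
    ring
  · intro h
    refine ⟨X / a, Y / b, by field_simp, by field_simp, ?_⟩
    field_simp
    linear_combination -h

end LinearPart

theorem hasFDerivAt_mul_of_eq_zero {𝕜 E 𝔸 : Type*} [NontriviallyNormedField 𝕜]
    [NormedAddCommGroup E] [NormedSpace 𝕜 E] [NormedRing 𝔸] [NormedAlgebra 𝕜 𝔸]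
    {f g : E → 𝔸} {x : E} (hf : DifferentiableAt 𝕜 f x) (hg : DifferentiableAt 𝕜 g x)
    (hf0 : f x = 0) (hg0 : g x = 0) : HasFDerivAt (fun y => f y * g y) (0 : E →L[𝕜] 𝔸) x := by
  convert hf.hasFDerivAt.fun_mul' hg.hasFDerivAt using 1
  ext v
  simp [hf0, hg0]

theorem hasFDerivAt_Gcay_zero (I11 I22 I13 I23 ε : ℝ) :
    HasFDerivAt (Gcay I11 I22 I13 I23 ε) (suslovLinearPart I11 I22 I13 I23) (0, 0) := by
  have hu : HasFDerivAt (fun p : ℝ × ℝ => p.1) (ContinuousLinearMap.fst ℝ ℝ ℝ) (0, 0) :=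
    hasFDerivAt_fst
  have hv : HasFDerivAt (fun p : ℝ × ℝ => p.2) (ContinuousLinearMap.snd ℝ ℝ ℝ) (0, 0) :=
    hasFDerivAt_snd
  have hQuad1 : HasFDerivAt (fun p : ℝ × ℝ => (ε / 2) * p.2 * (I13 * p.1 + I23 * p.2)) 0 (0, 0) :=
    hasFDerivAt_mul_of_eq_zero (by fun_prop) (by fun_prop) (by simp) (by simp)
  have hQuad2 : HasFDerivAt (fun p : ℝ × ℝ => (ε / 2) * p.1 * (I13 * p.1 + I23 * p.2)) 0 (0, 0) :=
    hasFDerivAt_mul_of_eq_zero (by fun_prop) (by fun_prop) (by simp) (by simp)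
  have hCubic1 : HasFDerivAt
      (fun p : ℝ × ℝ => (ε ^ 2 / 4) * p.1 * (I11 * p.1 ^ 2 + I22 * p.2 ^ 2)) 0 (0, 0) :=
    hasFDerivAt_mul_of_eq_zero (by fun_prop) (by fun_prop) (by simp) (by simp)
  have hCubic2 : HasFDerivAt
      (fun p : ℝ × ℝ => (ε ^ 2 / 4) * p.2 * (I11 * p.1 ^ 2 + I22 * p.2 ^ 2)) 0 (0, 0) :=
    hasFDerivAt_mul_of_eq_zero (by fun_prop) (by fun_prop) (by simp) (by simp)
  have hQuad3 : HasFDerivAt (fun p : ℝ × ℝ => (ε / 2) * p.1 * p.2) 0 (0, 0) :=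
    hasFDerivAt_mul_of_eq_zero (by fun_prop) (by fun_prop) (by simp) (by simp)
  have hLin3 := (hu.const_mul I13).fun_add (hv.const_mul I23)
  refine HasFDerivAt.prodMk ?_ (HasFDerivAt.prodMk ?_ ?_)
  · simpa using ((hu.const_mul I11).fun_add hQuad1).fun_add hCubic1
  · simpa using ((hv.const_mul I22).fun_sub hQuad2).fun_add hCubic2
  · simpa using hLin3.fun_add (hQuad3.mul_const (I22 - I11))

theorem suslov_momentum_locus_tangent_consistent_general
    (I11 I22 I13 I23 : ℝ) (hI11 : 0 < I11) (hI22 : 0 < I22)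
    (ε : ℝ) :
    Gcay I11 I22 I13 I23 ε (0, 0) = (0, 0, 0) ∧
      DifferentiableAt ℝ (Gcay I11 I22 I13 I23 ε) (0, 0) ∧
      Set.range (fderiv ℝ (Gcay I11 I22 I13 I23 ε) (0, 0)) =
        {p : ℝ × ℝ × ℝ | I11 * I22 * p.2.2 = I13 * I22 * p.1 + I11 * I23 * p.2.1} := by
  have hG := hasFDerivAt_Gcay_zero I11 I22 I13 I23 ε
  refine ⟨by simp [Gcay], hG.differentiableAt, ?_⟩
  rw [hG.fderiv, range_suslovLinearPart I13 I23 hI11.ne' hI22.ne']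

/-- The discrete momentum locus of the consistent (Cayley-based)
discretisation of the Suslov problem passes through the origin, the parametrisation is
differentiable at `(0,0)`, and the image of its derivative there is the constraint plane
`d*`; hence the momentum locus and `d*` are tangent at the origin. -/
theorem suslov_momentum_locus_tangent_consistent
    (I11 I22 I13 I23 : ℝ) (hI11 : 0 < I11) (hI22 : 0 < I22)
    (ε : ℝ) (hε : 0 < ε) :
    Gcay I11 I22 I13 I23 ε (0, 0) = (0, 0, 0) ∧
      DifferentiableAt ℝ (Gcay I11 I22 I13 I23 ε) (0, 0) ∧
      Set.range (fderiv ℝ (Gcay I11 I22 I13 I23 ε) (0, 0)) =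
        {p : ℝ × ℝ × ℝ | I11 * I22 * p.2.2 = I13 * I22 * p.1 + I11 * I23 * p.2.1} :=
  suslov_momentum_locus_tangent_consistent_general I11 I22 I13 I23 hI11 hI22 ε

end
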